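/- arXiv:2307.15921 — 3 statements merged into one kernel-verified Lean document; each statement's English description precedes it below -/
import Mathlib

section
/- For every real number x, the counterclockwise circle integral over the circle of radius 1/2 centered at i in ℂ satisfies (1/(2πi)) ∮_{|z-i|=1/2} z/((1+z²)²(x-z)) dz = -i/(4(x-i)²). (This is the Wodzicki projection π⁺ applied to the symbol ξ/(1+ξ²)², evaluated at ξ = x.) -/
/-!
Since `1 + z² = (z - i)(z + i)`, the integrand is `g z / (z - i)²` with
`g z = z / ((z + i)² (x - z))` holomorphic on the upper half-plane, so Cauchy's formula for the
derivative turns the normalised integral into `g'(i) = -i / (4 (x - i)²)`.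
-/

open Complex Metric

theorem Complex.one_add_sq_eq_mul (z : ℂ) : 1 + z ^ 2 = (z - I) * (z - -I) := by
  linear_combination I_sq

theorem Complex.im_sub_le_im_of_mem_closedBall {c z : ℂ} {r : ℝ} (hz : z ∈ closedBall c r) :
    c.im - r ≤ z.im := by
  have h := (abs_im_le_norm (z - c)).trans (mem_closedBall_iff_norm.1 hz)
  rw [sub_im] at h
  linarith [(abs_le.1 h).1]

theorem Complex.closedBall_subset_im_pos {c : ℂ} {r : ℝ} (hr : r < c.im) :
    closedBall c r ⊆ {z : ℂ | 0 < z.im} := fun z hz =>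
  show 0 < z.im by linarith [im_sub_le_im_of_mem_closedBall hz]

theorem Complex.sub_ne_zero_of_im_ne {z w : ℂ} (h : z.im ≠ w.im) : z - w ≠ 0 :=
  sub_ne_zero.2 fun hzw => h (congrArg im hzw)

theorem hasDerivAt_div_sq_sub_mul_sub {a b z : ℂ} (ha : z - a ≠ 0) (hb : b - z ≠ 0) :
    HasDerivAt (fun w => w / ((w - a) ^ 2 * (b - w)))
      (((z - a) ^ 2 * (b - z) - z * (2 * (z - a) * (b - z) - (z - a) ^ 2)) /
        ((z - a) ^ 2 * (b - z)) ^ 2) z := by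
  have hden : HasDerivAt (fun w => (w - a) ^ 2 * (b - w))
      (2 * (z - a) * (b - z) - (z - a) ^ 2) z :=
    ((((hasDerivAt_id' z).sub_const a).fun_pow 2).mul
      ((hasDerivAt_id' z).const_sub b)).congr_deriv (by ring)
  exact ((hasDerivAt_id' z).div hden (mul_ne_zero (pow_ne_zero 2 ha) hb)).congr_deriv (by ring)

/-- Wodzicki projection computation: for real `x`,
`(1/(2πi)) ∮_{|z-i|=1/2} z/((1 + z^2)^2·(x-z)) dz = -I / (4 * ((x : ℂ) - I)^2)`. -/
theorem circle_integral_stmt_6 (x : ℝ) :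
    (1 / (2 * (Real.pi : ℂ) * I)) *
      (∮ z in C(I, 1/2), z / ((1 + z^2)^2 * ((x : ℂ) - z))) = -I / (4 * ((x : ℂ) - I)^2) := by
  set g : ℂ → ℂ := fun w => w / ((w - -I) ^ 2 * ((x : ℂ) - w))
  have hg {z : ℂ} (hz : 0 < z.im) := hasDerivAt_div_sq_sub_mul_sub (a := -I) (b := x)
    (sub_ne_zero_of_im_ne (by simp only [neg_im, I_im]; exact (neg_one_lt_zero.trans hz).ne'))
    (sub_ne_zero_of_im_ne (by simp only [ofReal_im]; exact hz.ne))
  have hcauchy := two_pi_I_inv_smul_circleIntegral_sub_sq_inv_smul_of_differentiable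
    (isOpen_lt continuous_const continuous_im) (closedBall_subset_im_pos (c := I) (by norm_num))
    (fun z hz => (hg hz).differentiableAt.differentiableWithinAt)
    (mem_ball_self one_half_pos)
  have hintegrand : (fun z : ℂ => z / ((1 + z ^ 2) ^ 2 * ((x : ℂ) - z))) =
      fun z => ((z - I) ^ 2)⁻¹ • g z := by
    funext z
    simp only [g, one_add_sq_eq_mul, smul_eq_mul, div_eq_mul_inv, mul_pow, mul_inv]
    ring
  have hxI : (x : ℂ) - I ≠ 0 := sub_ne_zero_of_im_ne (by simp)
  rw [hintegrand, one_div, ← smul_eq_mul, hcauchy, (hg (by simp)).deriv]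
  field_simp
  linear_combination 8 * I * I_sq
end

section
/- For every real number x, the counterclockwise circle integral over the circle of radius 1/2 centered at i in ℂ satisfies (1/(2πi)) ∮_{|z-i|=1/2} z²/((1+z²)²(x-z)) dz = -ix/(4(x-i)²). (This is the Wodzicki projection π⁺ applied to the symbol ξ²/(1+ξ²)², evaluated at ξ = x.) -/
/-!
Since `1 + z² = (z - i)(z + i)`, the integrand is `g(z) / (z - i)²` with
`g(z) = z² / ((z + i)² (x - z))` holomorphic on the upper half-plane, which contains the closed
disc. By Cauchy's formula for the derivative the normalised integral is `g'(i)`, computed by the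
quotient rule.
-/

open Complex Metric

noncomputable def regularPart (u z : ℂ) : ℂ := z ^ 2 / ((z + I) ^ 2 * (u - z))

lemma one_div_sub_I_sq_smul_regularPart (u z : ℂ) :
    (1 / (z - I) ^ 2) • regularPart u z = z ^ 2 / ((1 + z ^ 2) ^ 2 * (u - z)) := by
  rw [regularPart, smul_eq_mul, show 1 + z ^ 2 = (z - I) * (z + I) by linear_combination I_sq,
    mul_pow]
  simp only [div_eq_mul_inv, mul_inv]
  ring

lemma im_pos_of_mem_closedBall_I {z : ℂ} {r : ℝ} (hr : r < 1) (hz : z ∈ closedBall I r) :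
    0 < z.im := by
  have h := (abs_im_le_norm (z - I)).trans (mem_closedBall_iff_norm.mp hz)
  rw [sub_im, I_im] at h
  linarith [(abs_le.mp h).1]

lemma differentiableOn_regularPart_im_pos {u : ℂ} (hu : u.im ≤ 0) :
    DifferentiableOn ℂ (regularPart u) {z | 0 < z.im} := by
  intro z (hz : 0 < z.im)
  have hzI : z + I ≠ 0 := fun h => by
    have := congrArg im h
    simp only [add_im, I_im, zero_im] at this
    linarith
  have huz : u - z ≠ 0 := fun h => by
    have := congrArg im h
    simp only [sub_im, zero_im] at this
    linarith
  have : DifferentiableAt ℂ (fun z => z ^ 2 / ((z + I) ^ 2 * (u - z))) z := by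
    fun_prop (disch := exact mul_ne_zero (pow_ne_zero 2 hzI) huz)
  exact this.differentiableWithinAt

lemma hasDerivAt_regularPart_I {u : ℂ} (hu : u ≠ I) :
    HasDerivAt (regularPart u) (-I * u / (4 * (u - I) ^ 2)) I := by
  have hnum : HasDerivAt (fun z : ℂ => z ^ 2) (2 * I) I := by
    simpa using hasDerivAt_pow 2 I
  have hden := (((hasDerivAt_id' I).add_const I).fun_pow 2).fun_mul
    ((hasDerivAt_id' I).const_sub u)
  have huI : u - I ≠ 0 := sub_ne_zero.mpr hu
  have hden0 : (I + I) ^ 2 * (u - I) ≠ 0 := by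
    have : I + I ≠ 0 := by simp
    positivity
  refine (hnum.fun_div hden hden0).congr_deriv ?_
  field_simp
  linear_combination 16 * I * u * I_sq

/-- Wodzicki projection computation: for real `x`,
`(1/(2πi)) ∮_{|z-i|=1/2} z^2/((1 + z^2)^2·(x-z)) dz = -I * (x : ℂ) / (4 * ((x : ℂ) - I)^2)`. -/
theorem circle_integral_stmt_7 (x : ℝ) :
    (1 / (2 * (Real.pi : ℂ) * I)) *
      (∮ z in C(I, 1/2), z^2 / ((1 + z^2)^2 * ((x : ℂ) - z))) = -I * (x : ℂ) / (4 * ((x : ℂ) - I)^2) := by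
  have hball : closedBall I (1 / 2) ⊆ {z : ℂ | 0 < z.im} :=
    fun z hz => im_pos_of_mem_closedBall_I (by norm_num) hz
  have hg := (differentiableOn_regularPart_im_pos (u := x) (by simp)).mono hball
  have hxI : (x : ℂ) ≠ I := fun h => by simpa using congrArg im h
  simp_rw [← one_div_sub_I_sq_smul_regularPart]
  rw [hg.deriv_eq_smul_circleIntegral (by norm_num), (hasDerivAt_regularPart_I hxI).deriv,
    smul_eq_mul, ← mul_assoc, one_div_mul_cancel two_pi_I_ne_zero, one_mul]
end

section
/- The improper integral over the real line of the complex-valued function ξ ↦ (2-6ξ²)/((ξ-i)⁴(ξ+i)³) satisfies ∫_{-∞}^{∞} (2-6ξ²)/((ξ-i)⁴(ξ+i)³) dξ = iπ/4. -/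
/-!
Decompose the integrand into partial fractions:
`(2 - 6ξ²) / ((ξ - i)⁴ (ξ + i)³) = i (ξ - i)⁻⁴ - (i/4) (ξ + i)⁻² + (1/2) (ξ + i)⁻³ + (i/4) (1 + ξ²)⁻¹`.
For `Im a ≠ 0` and `n ≥ 2`, the function `(ξ - a)⁻ⁿ` is integrable on `ℝ` and has the antiderivative
`-(n - 1)⁻¹ (ξ - a)^(1 - n)`, which vanishes at `±∞`, so its integral is `0`. Only the last term
survives, and `∫ (1 + ξ²)⁻¹ = π`.
-/

open Complex MeasureTheory Filter Topology

namespace Complex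

theorem sq_norm_ofReal_sub (x : ℝ) (a : ℂ) : ‖(x : ℂ) - a‖ ^ 2 = (x - a.re) ^ 2 + a.im ^ 2 := by
  rw [Complex.sq_norm, normSq_apply]
  simp only [sub_re, ofReal_re, sub_im, ofReal_im]
  ring

theorem abs_im_le_norm_ofReal_sub (x : ℝ) (a : ℂ) : |a.im| ≤ ‖(x : ℂ) - a‖ := by
  simpa using abs_im_le_norm ((x : ℂ) - a)

theorem ofReal_sub_ne_zero {a : ℂ} (ha : a.im ≠ 0) (x : ℝ) : (x : ℂ) - a ≠ 0 :=
  norm_pos_iff.mp ((abs_pos.mpr ha).trans_le (abs_im_le_norm_ofReal_sub x a))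

theorem two_sub_six_mul_sq_div_eq_partial_fractions {z : ℂ} (h₁ : z - I ≠ 0) (h₂ : z + I ≠ 0) :
    (2 - 6 * z ^ 2) / ((z - I) ^ 4 * (z + I) ^ 3) =
      I * ((z - I) ^ 4)⁻¹ - I / 4 * ((z + I) ^ 2)⁻¹ + 1 / 2 * ((z + I) ^ 3)⁻¹
        + I / 4 * (1 + z ^ 2)⁻¹ := by
  rw [show 1 + z ^ 2 = (z - I) * (z + I) by linear_combination I_sq]
  field_simp
  -- the cofactor is the quotient of the cleared identity by `I ^ 2 + 1`
  linear_combination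
    (16 - 16 * I ^ 2 + 4 * I ^ 4 - 8 * z * I ^ 3 - 48 * z ^ 2 + 8 * z ^ 3 * I - 4 * z ^ 4) * I_sq

end Complex

theorem integrable_inv_sub_sq_add_sq (x₀ : ℝ) {c : ℝ} (hc : c ≠ 0) :
    Integrable fun x : ℝ => ((x - x₀) ^ 2 + c ^ 2)⁻¹ := by
  refine (((integrable_inv_one_add_sq.comp_div hc).comp_sub_right x₀).const_mul (c ^ 2)⁻¹).congr
    (ae_of_all _ fun x => ?_)
  field_simp
  ring

theorem integrable_inv_one_add_ofReal_sq : Integrable fun x : ℝ => (1 + (x : ℂ) ^ 2)⁻¹ := by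
  simpa using integrable_inv_one_add_sq.ofReal (𝕜 := ℂ)

theorem integral_inv_one_add_ofReal_sq : ∫ x : ℝ, (1 + (x : ℂ) ^ 2)⁻¹ = (Real.pi : ℂ) := by
  rw [← integral_univ_inv_one_add_sq, ← integral_complex_ofReal]
  push_cast
  rfl

section PoleOffTheRealLine

variable {a : ℂ} {n : ℕ}

/-- Since `|Im a| ≤ ‖x - a‖`, the integrand is dominated by `|Im a|^(2 - n) ‖x - a‖⁻²`. -/
theorem integrable_inv_ofReal_sub_pow (ha : a.im ≠ 0) (hn : 2 ≤ n) :
    Integrable fun x : ℝ => (((x : ℂ) - a) ^ n)⁻¹ := by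
  obtain ⟨m, rfl⟩ := Nat.exists_eq_add_of_le' hn
  refine ((integrable_inv_sub_sq_add_sq a.re ha).const_mul (|a.im| ^ m)⁻¹).mono'
    (by fun_prop (disch := exact fun x => pow_ne_zero _ (ofReal_sub_ne_zero ha x)))
    (ae_of_all _ fun x => ?_)
  have him := abs_im_le_norm_ofReal_sub x a
  have hpos : 0 < |a.im| := abs_pos.mpr ha
  rw [norm_inv, norm_pow, pow_add, ← sq_norm_ofReal_sub, mul_inv]
  gcongr

theorem tendsto_inv_ofReal_sub_pow_cobounded (a : ℂ) (hn : n ≠ 0) :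
    Tendsto (fun x : ℝ => (((x : ℂ) - a) ^ n)⁻¹) (Bornology.cobounded ℝ) (𝓝 0) :=
  tendsto_inv₀_cobounded.comp <| (tendsto_pow_cobounded_cobounded hn).comp <|
    (tendsto_sub_const_cobounded a).comp (RCLike.tendsto_ofReal_cobounded_cobounded ℂ)

theorem integral_inv_ofReal_sub_pow (ha : a.im ≠ 0) (hn : 2 ≤ n) :
    ∫ x : ℝ, (((x : ℂ) - a) ^ n)⁻¹ = 0 := by
  obtain ⟨m, rfl⟩ := Nat.exists_eq_add_of_le' hn
  set F : ℝ → ℂ := fun x => -((m + 1 : ℂ)⁻¹ * (((x : ℂ) - a) ^ (m + 1))⁻¹)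
  have hF : ∀ x : ℝ, HasDerivAt F (((x : ℂ) - a) ^ (m + 2))⁻¹ x := fun x => by
    have hx := ofReal_sub_ne_zero ha x
    refine HasDerivAt.congr_deriv ((((((hasDerivAt_id (x : ℂ)).sub_const a).fun_pow (m + 1)).fun_inv
      (pow_ne_zero _ hx)).const_mul (m + 1 : ℂ)⁻¹).fun_neg.comp_ofReal) ?_
    simp only [id, Nat.add_sub_cancel, Nat.cast_succ]
    field_simp
    ring
  have hF_lim : Tendsto F (Bornology.cobounded ℝ) (𝓝 0) := by
    simpa using ((tendsto_inv_ofReal_sub_pow_cobounded a m.succ_ne_zero).const_mul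
      (m + 1 : ℂ)⁻¹).neg
  rw [integral_of_hasDerivAt_of_tendsto hF (integrable_inv_ofReal_sub_pow ha hn)
    (hF_lim.mono_left IsOrderBornology.atBot_le_cobounded)
    (hF_lim.mono_left IsOrderBornology.atTop_le_cobounded), sub_zero]

end PoleOffTheRealLine

/-- `∫_{-∞}^{∞} (2 - 6 * (ξ : ℂ)^2) / (((ξ : ℂ) - I)^4 * ((ξ : ℂ) + I)^3) dξ = I * (Real.pi : ℂ) / 4`. -/
theorem real_integral_stmt_14 :
    ∫ ξ : ℝ, (2 - 6 * (ξ : ℂ)^2) / (((ξ : ℂ) - I)^4 * ((ξ : ℂ) + I)^3) = I * (Real.pi : ℂ) / 4 := by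
  have hI : I.im ≠ 0 := by simp
  have hnegI : (-I).im ≠ 0 := by simp
  have hsplit (ξ : ℝ) : (2 - 6 * (ξ : ℂ)^2) / (((ξ : ℂ) - I)^4 * ((ξ : ℂ) + I)^3) =
      I * (((ξ : ℂ) - I) ^ 4)⁻¹ - I / 4 * (((ξ : ℂ) - -I) ^ 2)⁻¹
        + 1 / 2 * (((ξ : ℂ) - -I) ^ 3)⁻¹ + I / 4 * (1 + (ξ : ℂ) ^ 2)⁻¹ := by
    simp only [sub_neg_eq_add]
    exact two_sub_six_mul_sq_div_eq_partial_fractions (ofReal_sub_ne_zero hI ξ)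
      (by simpa using ofReal_sub_ne_zero hnegI ξ)
  have h₄ := integrable_inv_ofReal_sub_pow hI (n := 4) (by norm_num)
  have h₂ := integrable_inv_ofReal_sub_pow hnegI (n := 2) (by norm_num)
  have h₃ := integrable_inv_ofReal_sub_pow hnegI (n := 3) (by norm_num)
  have h₀ := integrable_inv_one_add_ofReal_sq
  simp only [hsplit]
  rw [integral_add (by fun_prop) (by fun_prop), integral_add (by fun_prop) (by fun_prop),
    integral_sub (by fun_prop) (by fun_prop)]
  simp only [integral_const_mul, integral_inv_ofReal_sub_pow hI (n := 4) (by norm_num),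
    integral_inv_ofReal_sub_pow hnegI (n := 2) (by norm_num),
    integral_inv_ofReal_sub_pow hnegI (n := 3) (by norm_num), integral_inv_one_add_ofReal_sq]
  ring
end
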